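/- arXiv:2405.18947 — 4 statements merged into one kernel-verified Lean document; each statement's English description precedes it below -/
import Mathlib

section
/- Let X be a Banach lattice and S, T : X → X linear operators such that |S x| ≤ T x for every x ≥ 0. Then S and T are bounded and ‖Sⁿ‖ ≤ ‖Tⁿ‖ for every natural number n. -/
/-!
A positive operator `T` on a Banach lattice is bounded (Lotz): otherwise one finds positive `uₙ`
with `‖uₙ‖ = 2⁻ⁿ` and `‖T uₙ‖ > n`, and the positive vector `s = ∑ uₙ` dominates every `uₙ`, so
`‖T s‖ ≥ ‖T uₙ‖ > n` for all `n`. Splitting `x = x⁺ - x⁻` turns the domination `|S x| ≤ T x` on the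
positive cone into `|S x| ≤ T |x|` everywhere, which bounds `S` by `T` and iterates to
`|Sⁿ x| ≤ Tⁿ |x|`; since the norm is solid, `‖Sⁿ x‖ ≤ ‖Tⁿ |x|‖ ≤ ‖Tⁿ‖ ‖x‖`.
-/

open Filter Topology

theorem abs_map_le_map_abs {E F Φ : Type*} [Lattice E] [AddCommGroup E] [IsOrderedAddMonoid E]
    [Lattice F] [AddCommGroup F] [IsOrderedAddMonoid F] [FunLike Φ E F] [AddMonoidHomClass Φ E F]
    {f g : Φ} (h : ∀ x, 0 ≤ x → |f x| ≤ g x) (x : E) : |f x| ≤ g |x| :=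
  calc |f x| = |f x⁺ + -f x⁻| := by
        rw [← map_neg, ← map_add, ← sub_eq_add_neg, posPart_sub_negPart]
    _ ≤ |f x⁺| + |f x⁻| := (abs_add_le _ _).trans_eq (by rw [abs_neg])
    _ ≤ g x⁺ + g x⁻ := add_le_add (h _ (posPart_nonneg x)) (h _ (negPart_nonneg x))
    _ = g |x| := by rw [← map_add, posPart_add_negPart]

theorem abs_iterate_le_iterate_abs {α : Type*} [Lattice α] [AddGroup α] {f g : α → α}
    (hg : Monotone g) (h : ∀ x, |f x| ≤ g |x|) :
    ∀ (n : ℕ) (x : α), |f^[n] x| ≤ g^[n] |x|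
  | 0, _ => le_rfl
  | n + 1, x => by
    rw [Function.iterate_succ_apply', Function.iterate_succ_apply']
    exact (h _).trans (hg (abs_iterate_le_iterate_abs hg h n x))

section NormedLattice

variable {E F : Type*} [NormedAddCommGroup E] [Lattice E] [HasSolidNorm E] [IsOrderedAddMonoid E]
  [NormedAddCommGroup F] [Lattice F] [HasSolidNorm F] [IsOrderedAddMonoid F]

theorem norm_le_norm_of_abs_le {a b : F} (h : |a| ≤ b) : ‖a‖ ≤ ‖b‖ :=
  norm_le_norm_of_abs_le_abs (h.trans_eq (abs_of_nonneg ((abs_nonneg a).trans h)).symm)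

/-- Only `2 • y ≥ 0 → y ≥ 0` is available in a lattice-ordered group, so the scalar is approximated
by dyadic rationals from below and the closedness of the positive cone finishes. -/
theorem HasSolidNorm.smul_nonneg [NormedSpace ℝ E] {c : ℝ} (hc : 0 ≤ c) {x : E} (hx : 0 ≤ x) :
    0 ≤ c • x := by
  have inv_two_pow : ∀ k : ℕ, 0 ≤ ((2 : ℝ) ^ k)⁻¹ • x := by
    intro k
    induction k with
    | zero => simpa using hx
    | succ k ih =>
      refine nsmul_two_semiclosed ?_
      rwa [← Nat.cast_smul_eq_nsmul ℝ, smul_smul, pow_succ, mul_inv, Nat.cast_ofNat,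
        mul_left_comm, mul_inv_cancel₀ two_ne_zero, mul_one]
  have dyadic : ∀ m k : ℕ, 0 ≤ ((m : ℝ) / 2 ^ k) • x := fun m k => by
    rw [div_eq_mul_inv, ← smul_smul, Nat.cast_smul_eq_nsmul]
    exact nsmul_nonneg (inv_two_pow k) m
  have approx : Tendsto (fun k : ℕ => (⌊c * 2 ^ k⌋₊ : ℝ) / 2 ^ k) atTop (𝓝 c) :=
    (tendsto_nat_floor_mul_div_atTop hc).comp (tendsto_pow_atTop_atTop_of_one_lt one_lt_two)
  exact isClosed_nonneg.mem_of_tendsto (approx.smul_const x) (.of_forall fun k => dyadic _ k)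

theorem LinearMap.exists_norm_apply_le_of_nonneg [NormedSpace ℝ E] [CompleteSpace E]
    [NormedSpace ℝ F] (T : E →ₗ[ℝ] F) (hT : ∀ x, 0 ≤ x → 0 ≤ T x) :
    ∃ M, ∀ x, 0 ≤ x → ‖T x‖ ≤ M * ‖x‖ := by
  by_contra! unbounded
  choose x hx_nonneg hx using fun n : ℕ => unbounded (n * 2 ^ n)
  have hx_pos : ∀ n, 0 < ‖x n‖ := fun n =>
    norm_pos_iff.2 fun h0 => by simpa [h0] using hx n
  set u : ℕ → E := fun n => ((2 : ℝ) ^ n * ‖x n‖)⁻¹ • x n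
  have hu_nonneg : ∀ n, 0 ≤ u n := fun n => HasSolidNorm.smul_nonneg (by positivity) (hx_nonneg n)
  have hu_norm : ∀ n, ‖u n‖ = (1 / 2) ^ n := fun n => by
    rw [norm_smul, norm_inv, norm_mul, norm_pow, Real.norm_two, norm_norm, mul_inv,
      inv_mul_cancel_right₀ (hx_pos n).ne', one_div_pow, one_div]
  have hTu : ∀ n : ℕ, n < ‖T (u n)‖ := fun n => by
    have hc : 0 < (2 : ℝ) ^ n * ‖x n‖ := mul_pos (by positivity) (hx_pos n)
    calc (n : ℝ) = (2 ^ n * ‖x n‖)⁻¹ * (n * 2 ^ n * ‖x n‖) := by field_simp [(hx_pos n).ne']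
      _ < (2 ^ n * ‖x n‖)⁻¹ * ‖T (x n)‖ := mul_lt_mul_of_pos_left (hx n) (inv_pos.2 hc)
      _ = ‖T (u n)‖ := by
        simp only [u, map_smul, norm_smul, norm_inv, Real.norm_of_nonneg hc.le]
  have hu_summable : Summable u :=
    .of_norm (by simpa only [hu_norm] using summable_geometric_two)
  obtain ⟨n, hn⟩ := exists_nat_gt ‖T (∑' k, u k)‖
  have hTu_le : ‖T (u n)‖ ≤ ‖T (∑' k, u k)‖ := by
    refine norm_le_norm_of_abs_le ((abs_of_nonneg (hT _ (hu_nonneg n))).trans_le ?_)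
    exact (monotone_iff_map_nonneg T).2 hT (hu_summable.le_tsum n fun k _ => hu_nonneg k)
  linarith [hTu n]

theorem LinearMap.exists_continuous_of_abs_apply_le [NormedSpace ℝ E] [CompleteSpace E]
    [NormedSpace ℝ F] {S T : E →ₗ[ℝ] F} (hT : ∀ x, 0 ≤ x → 0 ≤ T x) (h : ∀ x, |S x| ≤ T |x|) :
    ∃ S' : E →L[ℝ] F, (S' : E →ₗ[ℝ] F) = S := by
  obtain ⟨M, hM⟩ := T.exists_norm_apply_le_of_nonneg hT
  refine ⟨S.mkContinuous M fun x => ?_, rfl⟩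
  calc ‖S x‖ ≤ ‖T |x|‖ := norm_le_norm_of_abs_le (h x)
    _ ≤ M * ‖|x|‖ := hM _ (abs_nonneg x)
    _ = M * ‖x‖ := by rw [norm_abs_eq_norm]

theorem ContinuousLinearMap.opNorm_le_of_abs_apply_le [NormedSpace ℝ E] [NormedSpace ℝ F]
    {S T : E →L[ℝ] F} (h : ∀ x, |S x| ≤ T |x|) : ‖S‖ ≤ ‖T‖ :=
  S.opNorm_le_bound (norm_nonneg _) fun x =>
    calc ‖S x‖ ≤ ‖T |x|‖ := norm_le_norm_of_abs_le (h x)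
      _ ≤ ‖T‖ * ‖|x|‖ := T.le_opNorm _
      _ = ‖T‖ * ‖x‖ := by rw [norm_abs_eq_norm]

end NormedLattice

/-- Let `X` be a Banach lattice and `S, T : X → X` linear operators such that
`|S x| ≤ T x` for every `x ≥ 0`. Then `S` and `T` are bounded and
`‖Sⁿ‖ ≤ ‖Tⁿ‖` for every natural number `n`. -/
theorem bounded_and_norm_pow_le {X : Type*} [NormedAddCommGroup X] [Lattice X] [HasSolidNorm X]
    [IsOrderedAddMonoid X]
    [NormedSpace ℝ X] [CompleteSpace X]
    (S T : X →ₗ[ℝ] X)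
    (h : ∀ x : X, 0 ≤ x → |S x| ≤ T x) :
    ∃ (S' T' : X →L[ℝ] X), (∀ x, S' x = S x) ∧ (∀ x, T' x = T x) ∧
      ∀ n : ℕ, ‖S' ^ n‖ ≤ ‖T' ^ n‖ := by
  have hT : ∀ x, 0 ≤ x → 0 ≤ T x := fun x hx => (abs_nonneg _).trans (h x hx)
  have hS_abs : ∀ x, |S x| ≤ T |x| := abs_map_le_map_abs h
  have hT_abs : ∀ x, |T x| ≤ T |x| :=
    abs_map_le_map_abs fun x hx => (abs_of_nonneg (hT x hx)).le
  obtain ⟨S', rfl⟩ := LinearMap.exists_continuous_of_abs_apply_le hT hS_abs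
  obtain ⟨T', rfl⟩ := LinearMap.exists_continuous_of_abs_apply_le hT hT_abs
  refine ⟨S', T', fun _ => rfl, fun _ => rfl, fun n => ?_⟩
  refine ContinuousLinearMap.opNorm_le_of_abs_apply_le fun x => ?_
  rw [FunLike.coe_pow_eq_iterate, FunLike.coe_pow_eq_iterate]
  exact abs_iterate_le_iterate_abs ((monotone_iff_map_nonneg T').2 hT) hS_abs n x
end

section
/- Let f, g : [0,∞) → ℝ^N be nonnegative compactly supported continuous functions, T a positive linear operator on the space of compactly supported continuous ℝ^N-valued functions, and 1 < p < ∞ with conjugate exponent p'. Then T(f·g) ≤ (T f^p)^{1/p} · (T g^{p'})^{1/p'} pointwise and componentwise, where powers and products of ℝ^N-valued functions are taken componentwise. -/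
/-!
For fixed `s` and `i`, `L u = T u s i` is a positive linear functional. Given `A > L (f ^ p)` and
`B > L (g ^ q)`, Young's inequality applied to `f / A^(1/p)` and `g / B^(1/q)` says that
`K ((pA)⁻¹ fᵖ + (qB)⁻¹ g^q) - f g` is nonnegative, where `K = A^(1/p) B^(1/q)`; positivity of `L`
and `1/p + 1/q = 1` then give `L (f g) ≤ K`. Let `A` and `B` decrease to `L (f ^ p)` and
`L (g ^ q)`.
-/

open Real

namespace Real

theorem mul_le_rpow_inv_mul_rpow_inv_mul_add {a b A B p q : ℝ} (ha : 0 ≤ a) (hb : 0 ≤ b)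
    (hA : 0 < A) (hB : 0 < B) (hpq : p.HolderConjugate q) :
    a * b ≤ A ^ p⁻¹ * B ^ q⁻¹ * (a ^ p / (p * A) + b ^ q / (q * B)) := by
  have hAp : 0 < A ^ p⁻¹ := rpow_pos_of_pos hA _
  have hBq : 0 < B ^ q⁻¹ := rpow_pos_of_pos hB _
  have young := young_inequality_of_nonneg (div_nonneg ha hAp.le) (div_nonneg hb hBq.le) hpq
  rw [div_rpow ha hAp.le, div_rpow hb hBq.le, ← rpow_mul hA.le, ← rpow_mul hB.le,
    inv_mul_cancel₀ hpq.ne_zero, inv_mul_cancel₀ hpq.symm.ne_zero, rpow_one, rpow_one,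
    div_mul_div_comm, div_le_iff₀ (mul_pos hAp hBq)] at young
  calc a * b ≤ (a ^ p / A / p + b ^ q / B / q) * (A ^ p⁻¹ * B ^ q⁻¹) := young
    _ = _ := by ring

theorem le_rpow_mul_rpow_of_forall_lt {x A B a b : ℝ} (ha : 0 ≤ a) (hb : 0 ≤ b)
    (h : ∀ A' B', A < A' → B < B' → x ≤ A' ^ a * B' ^ b) :
    x ≤ A ^ a * B ^ b := by
  have hcont : ContinuousAt (fun ε : ℝ => (A + ε) ^ a * (B + ε) ^ b) 0 := by
    fun_prop (disch := simp [ha, hb])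
  have hlim := hcont.tendsto.mono_left (nhdsWithin_le_nhds (s := Set.Ioi 0))
  simp only [add_zero] at hlim
  refine ge_of_tendsto hlim (eventually_mem_nhdsWithin.mono fun ε hε => ?_)
  exact h _ _ (lt_add_of_pos_right A hε) (lt_add_of_pos_right B hε)

end Real

section

variable {X ι : Type*} [TopologicalSpace X]

theorem Continuous.rpow_const_pi {f : X → ι → ℝ} (hf : Continuous f) {p : ℝ} (hp : 0 ≤ p) :
    Continuous fun x i => f x i ^ p :=
  continuous_pi fun i => ((continuous_apply i).comp hf).rpow_const fun _ => Or.inr hp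

theorem HasCompactSupport.rpow_const_pi {f : X → ι → ℝ} (hf : HasCompactSupport f) {p : ℝ}
    (hp : p ≠ 0) : HasCompactSupport fun x i => f x i ^ p :=
  hf.comp_left (g := fun y i => y i ^ p) (funext fun _ => zero_rpow hp)

variable (L : (X → ι → ℝ) →ₗ[ℝ] ℝ)

theorem LinearMap.apply_mul_le_of_le_of_le
    (hL : ∀ u : X → ι → ℝ, Continuous u → HasCompactSupport u → 0 ≤ u → 0 ≤ L u)
    {f g : X → ι → ℝ} (hfc : Continuous f) (hfs : HasCompactSupport f) (hf0 : 0 ≤ f)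
    (hgc : Continuous g) (hgs : HasCompactSupport g) (hg0 : 0 ≤ g)
    {p q A B : ℝ} (hpq : p.HolderConjugate q) (hA : 0 < A) (hB : 0 < B)
    (hfA : L (fun x i => f x i ^ p) ≤ A) (hgB : L (fun x i => g x i ^ q) ≤ B) :
    L (f * g) ≤ A ^ p⁻¹ * B ^ q⁻¹ := by
  set K := A ^ p⁻¹ * B ^ q⁻¹
  set fp : X → ι → ℝ := fun x i => f x i ^ p
  set gq : X → ι → ℝ := fun x i => g x i ^ q
  set φ := K • ((p * A)⁻¹ • fp + (q * B)⁻¹ • gq) - f * g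
  have hφ0 : 0 ≤ φ := fun x i => by
    have young := mul_le_rpow_inv_mul_rpow_inv_mul_add (hf0 x i) (hg0 x i) hA hB hpq
    simp only [φ, fp, gq, Pi.sub_apply, Pi.add_apply, Pi.smul_apply, Pi.mul_apply, smul_eq_mul,
      Pi.zero_apply]
    rw [sub_nonneg]
    convert young using 2; ring
  have hφ : 0 ≤ L φ := hL φ
    (((((hfc.rpow_const_pi hpq.nonneg).const_smul _).add
      ((hgc.rpow_const_pi hpq.symm.nonneg).const_smul _)).const_smul _).sub (hfc.mul hgc))
    (((((hfs.rpow_const_pi hpq.ne_zero).smul_left).add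
      (hgs.rpow_const_pi hpq.symm.ne_zero).smul_left).smul_left).sub hfs.mul_right) hφ0
  have hp := hpq.pos
  have hq := hpq.symm.pos
  calc L (f * g) ≤ K * ((p * A)⁻¹ * L fp + (q * B)⁻¹ * L gq) := by
        simpa only [φ, map_sub, map_add, map_smul, smul_eq_mul, sub_nonneg] using hφ
    _ ≤ K * ((p * A)⁻¹ * A + (q * B)⁻¹ * B) := by
        gcongr
    _ = K * (p⁻¹ + q⁻¹) := by
        field_simp
    _ = K := by
        rw [hpq.inv_add_inv_eq_one, mul_one]

theorem LinearMap.apply_mul_le_rpow_mul_rpow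
    (hL : ∀ u : X → ι → ℝ, Continuous u → HasCompactSupport u → 0 ≤ u → 0 ≤ L u)
    {f g : X → ι → ℝ} (hfc : Continuous f) (hfs : HasCompactSupport f) (hf0 : 0 ≤ f)
    (hgc : Continuous g) (hgs : HasCompactSupport g) (hg0 : 0 ≤ g)
    {p q : ℝ} (hpq : p.HolderConjugate q) :
    L (f * g) ≤ L (fun x i => f x i ^ p) ^ p⁻¹ * L (fun x i => g x i ^ q) ^ q⁻¹ := by
  have hfp : 0 ≤ L (fun x i => f x i ^ p) := hL _ (hfc.rpow_const_pi hpq.nonneg)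
    (hfs.rpow_const_pi hpq.ne_zero) fun x i => rpow_nonneg (hf0 x i) p
  have hgq : 0 ≤ L (fun x i => g x i ^ q) := hL _ (hgc.rpow_const_pi hpq.symm.nonneg)
    (hgs.rpow_const_pi hpq.symm.ne_zero) fun x i => rpow_nonneg (hg0 x i) q
  refine le_rpow_mul_rpow_of_forall_lt (inv_nonneg.2 hpq.nonneg) (inv_nonneg.2 hpq.symm.nonneg)
    fun A B hA hB => ?_
  exact L.apply_mul_le_of_le_of_le hL hfc hfs hf0 hgc hgs hg0 hpq (hfp.trans_lt hA)
    (hgq.trans_lt hB) hA.le hB.le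

end

/-- Hölder-type inequality for a positive linear operator `T` on the space of
compactly supported continuous `ℝ^N`-valued functions: for nonnegative
compactly supported continuous `f, g` and conjugate exponents `p, p'`,
`T(f·g) ≤ (T f^p)^{1/p} · (T g^{p'})^{1/p'}` pointwise and componentwise
(powers and products taken componentwise). -/
theorem holder_type_positive_operator {N : ℕ}
    (T : (ℝ → (Fin N → ℝ)) →ₗ[ℝ] (ℝ → (Fin N → ℝ)))
    (hTpos : ∀ u : ℝ → (Fin N → ℝ), Continuous u → HasCompactSupport u →
      (∀ s, 0 ≤ u s) → ∀ s, 0 ≤ T u s)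
    (p p' : ℝ) (hp : 1 < p) (hpp' : 1 / p + 1 / p' = 1)
    (f g : ℝ → (Fin N → ℝ))
    (hfc : Continuous f) (hfs : HasCompactSupport f) (hf0 : ∀ s, 0 ≤ f s)
    (hgc : Continuous g) (hgs : HasCompactSupport g) (hg0 : ∀ s, 0 ≤ g s) :
    ∀ s : ℝ, 0 ≤ s → ∀ i : Fin N,
      T (fun x i => f x i * g x i) s i ≤
        (T (fun x i => f x i ^ p) s i) ^ (1 / p) *
          (T (fun x i => g x i ^ p') s i) ^ (1 / p') := by
  intro s _ i
  have hpq : p.HolderConjugate p' := 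
    holderConjugate_iff.2 ⟨hp, by simpa only [one_div] using hpp'⟩
  let L := (LinearMap.proj i ∘ₗ LinearMap.proj s) ∘ₗ T
  have hL : ∀ u, Continuous u → HasCompactSupport u → 0 ≤ u → 0 ≤ L u :=
    fun u hc hs h0 => hTpos u hc hs h0 s i
  rw [one_div, one_div]
  exact L.apply_mul_le_rpow_mul_rpow hL hfc hfs hf0 hgc hgs hg0 hpq
end

section
/- Let A generate a positive C₀-semigroup on a Banach lattice X, and let X_{−1,+} denote the closure of X₊ in the extrapolation space X_{−1}. Then a linear operator B : U → X_{−1} (U a Banach lattice) is positive, i.e. B U₊ ⊆ X_{−1,+}, if and only if R(λ, A_{−1}) B : U → X is positive for all λ > s(A). -/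
open Filter Topology Set MeasureTheory

/-- A strongly continuous one-parameter semigroup of bounded operators. -/
structure C0Semigroup (X : Type*) [NormedAddCommGroup X] [NormedSpace ℝ X] where
  toFun : ℝ → X →L[ℝ] X
  map_zero' : toFun 0 = ContinuousLinearMap.id ℝ X
  map_add' : ∀ s t : ℝ, 0 ≤ s → 0 ≤ t → toFun (s + t) = (toFun s).comp (toFun t)
  strongCont' : ∀ x : X, ContinuousOn (fun t => toFun t x) (Set.Ici 0)

/-- `A` (an unbounded operator given as a partial linear map) is the generator
of the `C₀`-semigroup `T`. -/
def C0Semigroup.IsGenerator {X : Type*} [NormedAddCommGroup X] [NormedSpace ℝ X]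
    (T : C0Semigroup X) (A : X →ₗ.[ℝ] X) : Prop :=
  (∀ x : X, x ∈ A.domain ↔
      ∃ y : X, Tendsto (fun t : ℝ => t⁻¹ • (T.toFun t x - x)) (𝓝[>] 0) (𝓝 y)) ∧
  (∀ x : A.domain,
      Tendsto (fun t : ℝ => t⁻¹ • (T.toFun t (x : X) - (x : X))) (𝓝[>] 0) (𝓝 (A x)))

/-- `R` is the resolvent `R(l, A)` of the partial linear operator `A`. -/
def IsResolventAt {X : Type*} [NormedAddCommGroup X] [NormedSpace ℝ X]
    (A : X →ₗ.[ℝ] X) (l : ℝ) (R : X →L[ℝ] X) : Prop :=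
  (∀ x : X, ∃ h : R x ∈ A.domain, l • R x - A ⟨R x, h⟩ = x) ∧
  (∀ x : A.domain, R (l • (x : X) - A x) = x)

/-- The semigroup has negative growth bound. -/
def C0Semigroup.NegGrowthBound {X : Type*} [NormedAddCommGroup X] [NormedSpace ℝ X]
    (T : C0Semigroup X) : Prop :=
  ∃ ε > (0:ℝ), ∃ M : ℝ, ∀ t : ℝ, 0 ≤ t → ‖T.toFun t‖ ≤ M * Real.exp (-ε * t)

/-!
For `λ` beyond the growth bound of `T₋₁`, `R(λ, A₋₁)` is the Laplace transform
`∫₀^∞ e^{-λt} T₋₁(t) dt`. Hence `λ R(λ, A₋₁) y → y` as `λ → ∞`, which puts `B u` in the closure of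
`j(X₊)` once every `R(λ, A₋₁) B u` is positive. On `j(X)` the Laplace transform is
`j ∫₀^∞ e^{-λt} T(t) dt`, so `P(λ) = R(λ, A₋₁) j` is positive for large `λ`. Positivity spreads down
to every `λ > s`: by the resolvent identity, for `μ < λ` close to `λ`, `P(μ)` is the fixed point of
the contraction `S ↦ P(λ) + (λ - μ) P(λ) S`, which preserves positive operators; the admissible step
`λ - μ` is locally uniform, so a supremum argument reaches every `λ > s`. Finally, positivity of
`R(λ, A₋₁)` on `j(X₊)` extends to its closure by continuity.
-/

theorem inv_two_pow_smul_nonneg {X : Type*} [AddCommGroup X] [Lattice X] [IsOrderedAddMonoid X]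
    [Module ℝ X] {x : X} (hx : 0 ≤ x) (n : ℕ) : 0 ≤ ((2 : ℝ) ^ n)⁻¹ • x := by
  induction n with
  | zero => simpa using hx
  | succ n ih =>
    apply nsmul_two_semiclosed
    rwa [two_nsmul, ← add_smul, pow_succ, mul_inv, ← mul_two, mul_assoc,
      inv_mul_cancel₀ two_ne_zero, mul_one]

section NormedLattice

variable {X : Type*} [NormedAddCommGroup X] [Lattice X] [HasSolidNorm X] [IsOrderedAddMonoid X]
  [NormedSpace ℝ X]

-- Compatibility of the order with real scalars is not among the hypotheses on `X`: it comes from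
-- `0 ≤ 2 • y → 0 ≤ y` in lattice-ordered groups and the closedness of the positive cone.
theorem real_smul_nonneg {c : ℝ} {x : X} (hc : 0 ≤ c) (hx : 0 ≤ x) : 0 ≤ c • x := by
  have hdyadic : Tendsto (fun n : ℕ => (⌊c * 2 ^ n⌋₊ : ℝ) / 2 ^ n) atTop (𝓝 c) :=
    (tendsto_nat_floor_mul_div_atTop hc).comp (tendsto_pow_atTop_atTop_of_one_lt one_lt_two)
  refine isClosed_Ici.mem_of_tendsto (hdyadic.smul_const x) (Eventually.of_forall fun n => ?_)
  rw [mem_Ici, div_eq_mul_inv, ← smul_smul, Nat.cast_smul_eq_nsmul]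
  exact nsmul_nonneg (inv_two_pow_smul_nonneg hx n) _

instance : IsOrderedModule ℝ X := .of_smul_nonneg fun _ hc _ hx => real_smul_nonneg hc hx

theorem mapsTo_nonneg_of_eq_add_smul_comp {P Q : X →L[ℝ] X} {c : ℝ}
    (hP : MapsTo P (Ici 0) (Ici 0)) (hc : 0 ≤ c) (hcP : c * ‖P‖ < 1)
    (hQ : Q = P + c • P.comp Q) : MapsTo Q (Ici 0) (Ici 0) := by
  set F : (X →L[ℝ] X) → X →L[ℝ] X := fun S => P + c • P.comp S
  have hpos : ∀ n, MapsTo (F^[n] 0) (Ici 0) (Ici 0) := by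
    intro n
    induction n with
    | zero => intro x _; simp
    | succ n ih =>
      intro x hx
      rw [Function.iterate_succ_apply']
      exact add_nonneg (hP hx) (smul_nonneg hc (hP (ih hx)))
  have hdist : ∀ n, ‖F^[n] 0 - Q‖ ≤ (c * ‖P‖) ^ n * ‖Q‖ := by
    intro n
    induction n with
    | zero => simp
    | succ n ih =>
      have hstep : F^[n + 1] 0 - Q = c • P.comp (F^[n] 0 - Q) := by
        conv_lhs => rw [Function.iterate_succ_apply', hQ]
        simp only [F, ContinuousLinearMap.comp_sub, smul_sub]
        abel
      calc ‖F^[n + 1] 0 - Q‖ ≤ c * (‖P‖ * ‖F^[n] 0 - Q‖) := by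
            rw [hstep, norm_smul, Real.norm_of_nonneg hc]
            gcongr
            exact ContinuousLinearMap.opNorm_comp_le _ _
        _ ≤ c * (‖P‖ * ((c * ‖P‖) ^ n * ‖Q‖)) := by gcongr
        _ = (c * ‖P‖) ^ (n + 1) * ‖Q‖ := by ring
  have hconv : Tendsto (fun n => F^[n] 0) atTop (𝓝 Q) := by
    rw [tendsto_iff_norm_sub_tendsto_zero]
    refine squeeze_zero (fun _ => norm_nonneg _) hdist ?_
    simpa using (tendsto_pow_atTop_nhds_zero_of_lt_one (by positivity) hcP).mul_const ‖Q‖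
  intro x hx
  exact isClosed_Ici.mem_of_tendsto (((continuous_eval_const x).tendsto Q).comp hconv)
    (Eventually.of_forall fun n => hpos n hx)

end NormedLattice

theorem tendsto_inv_smul_integral_Ioc {E : Type*} [NormedAddCommGroup E] [NormedSpace ℝ E]
    [CompleteSpace E] {f : ℝ → E} (hf : ContinuousOn f (Ici 0)) :
    Tendsto (fun τ : ℝ => τ⁻¹ • ∫ t in Ioc 0 τ, f t) (𝓝[>] 0) (𝓝 (f 0)) := by
  have hderiv : HasDerivWithinAt (fun τ => ∫ t in (0 : ℝ)..τ, f t) (f 0) (Ici 0) 0 :=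
    intervalIntegral.integral_hasDerivWithinAt_right (t := Ioi 0) IntervalIntegrable.refl
      ⟨Ioi 0, self_mem_nhdsWithin,
        (hf.mono Ioi_subset_Ici_self).aestronglyMeasurable measurableSet_Ioi⟩
      ((hf.continuousWithinAt self_mem_Ici).mono Ioi_subset_Ici_self)
  rw [hasDerivWithinAt_iff_tendsto_slope, Ici_sdiff_left] at hderiv
  refine hderiv.congr' (eventually_nhdsWithin_of_forall fun τ (hτ : 0 < τ) => ?_)
  simp only [slope, vsub_eq_sub, sub_zero, intervalIntegral.integral_same,
    intervalIntegral.integral_of_le hτ.le]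

namespace C0Semigroup

variable {Z : Type*} [NormedAddCommGroup Z] [NormedSpace ℝ Z]

theorem exists_norm_le_on_Icc [CompleteSpace Z] (T : C0Semigroup Z) :
    ∃ M, 1 ≤ M ∧ ∀ r ∈ Icc (0 : ℝ) 1, ‖T.toFun r‖ ≤ M := by
  have hbdd : ∀ z : Z, ∃ C, ∀ r : Icc (0 : ℝ) 1, ‖T.toFun r z‖ ≤ C := fun z => by
    obtain ⟨C, hC⟩ := isCompact_Icc.exists_bound_of_continuousOn
      ((T.strongCont' z).mono Icc_subset_Ici_self)
    exact ⟨C, fun r => hC r r.2⟩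
  obtain ⟨C, hC⟩ := banach_steinhaus hbdd
  exact ⟨max C 1, le_max_right _ _, fun r hr => (hC ⟨r, hr⟩).trans (le_max_left _ _)⟩

theorem norm_toFun_nat_add_le (T : C0Semigroup Z) {M : ℝ} (hM0 : 0 ≤ M)
    (hM : ∀ r ∈ Icc (0 : ℝ) 1, ‖T.toFun r‖ ≤ M) (n : ℕ) {r : ℝ} (hr : r ∈ Icc (0 : ℝ) 1) :
    ‖T.toFun (n + r)‖ ≤ M ^ (n + 1) := by
  induction n with
  | zero => simpa using hM r hr
  | succ n ih =>
    rw [Nat.cast_succ, add_right_comm, add_comm,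
      T.map_add' 1 _ zero_le_one (by linarith [hr.1]), pow_succ']
    exact (ContinuousLinearMap.opNorm_comp_le _ _).trans
      (mul_le_mul (hM 1 (right_mem_Icc.2 zero_le_one)) ih (norm_nonneg _) hM0)

def HasExpBound (T : C0Semigroup Z) (M ω : ℝ) : Prop :=
  ∀ t, 0 ≤ t → ‖T.toFun t‖ ≤ M * Real.exp (ω * t)

theorem exists_hasExpBound [CompleteSpace Z] (T : C0Semigroup Z) : ∃ M ω, T.HasExpBound M ω := by
  obtain ⟨M, hM1, hM⟩ := T.exists_norm_le_on_Icc
  have hM0 : 0 < M := zero_lt_one.trans_le hM1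
  refine ⟨M, Real.log M, fun t ht => ?_⟩
  have hfloor : (⌊t⌋₊ : ℝ) ≤ t := Nat.floor_le ht
  have hfrac : t - ⌊t⌋₊ ∈ Icc (0 : ℝ) 1 := ⟨by linarith, by linarith [Nat.lt_floor_add_one t]⟩
  calc ‖T.toFun t‖ = ‖T.toFun (⌊t⌋₊ + (t - ⌊t⌋₊))‖ := by rw [add_sub_cancel]
    _ ≤ M ^ (⌊t⌋₊ + 1) := T.norm_toFun_nat_add_le hM0.le hM _ hfrac
    _ = M * Real.exp (Real.log M * ⌊t⌋₊) := by
      rw [pow_succ', mul_comm (Real.log M), Real.exp_nat_mul, Real.exp_log hM0]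
    _ ≤ M * Real.exp (Real.log M * t) := by
      gcongr
      exact Real.log_nonneg hM1

-- A Bochner integral, hence `0` whenever it diverges.
noncomputable def laplace (T : C0Semigroup Z) (l : ℝ) (z : Z) : Z :=
  ∫ t in Ioi 0, Real.exp (-l * t) • T.toFun t z

theorem continuousOn_exp_smul_toFun (T : C0Semigroup Z) (l : ℝ) (z : Z) :
    ContinuousOn (fun t => Real.exp (-l * t) • T.toFun t z) (Ici 0) :=
  (Real.continuous_exp.comp (continuous_const_mul (-l))).continuousOn.smul (T.strongCont' z)

variable {T : C0Semigroup Z} {M ω l : ℝ}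

theorem integrableOn_exp_smul_toFun (hM : T.HasExpBound M ω)
    (hl : ω < l) (z : Z) : IntegrableOn (fun t => Real.exp (-l * t) • T.toFun t z) (Ioi 0) := by
  refine Integrable.mono' ((exp_neg_integrableOn_Ioi 0 (sub_pos.2 hl)).const_mul (M * ‖z‖))
    ((T.continuousOn_exp_smul_toFun l z).mono Ioi_subset_Ici_self |>.aestronglyMeasurable
      measurableSet_Ioi) ?_
  filter_upwards [self_mem_ae_restrict measurableSet_Ioi] with t (ht : 0 < t)
  calc ‖Real.exp (-l * t) • T.toFun t z‖
        ≤ Real.exp (-l * t) * (M * Real.exp (ω * t) * ‖z‖) := by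
        rw [norm_smul, Real.norm_of_nonneg (Real.exp_pos _).le]
        gcongr
        exact (T.toFun t).le_of_opNorm_le (hM t ht.le) z
    _ = M * ‖z‖ * Real.exp (-(l - ω) * t) := by
        rw [show -(l - ω) * t = -l * t + ω * t by ring, Real.exp_add]; ring

theorem smul_laplace_eq_integral (hl : 0 < l) (z : Z) :
    l • T.laplace l z = ∫ t in Ioi 0, Real.exp (-t) • T.toFun (t / l) z := by
  have hsubst := integral_comp_mul_left_Ioi (fun t => Real.exp (-t) • T.toFun (t / l) z) 0 hl
  rw [mul_zero, setIntegral_congr_fun measurableSet_Ioi fun t _ => by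
    rw [mul_div_cancel_left₀ _ hl.ne', ← neg_mul]] at hsubst
  rw [laplace, hsubst, smul_inv_smul₀ hl.ne']

variable [CompleteSpace Z]

theorem toFun_laplace (hM : T.HasExpBound M ω) (hl : ω < l)
    (z : Z) {τ : ℝ} (hτ : 0 < τ) :
    T.toFun τ (T.laplace l z) =
      Real.exp (l * τ) • (T.laplace l z - ∫ t in Ioc 0 τ, Real.exp (-l * t) • T.toFun t z) := by
  set F : ℝ → Z := fun t => Real.exp (-l * t) • T.toFun t z
  have hF : IntegrableOn F (Ioi 0) := integrableOn_exp_smul_toFun hM hl z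
  have hshift : ∀ t ∈ Ioi (0 : ℝ), T.toFun τ (F t) = Real.exp (l * τ) • F (t + τ) := by
    intro t ht
    simp only [F, map_smul, smul_smul, ← Real.exp_add, add_comm t τ,
      T.map_add' τ t hτ.le (le_of_lt ht)]
    ring_nf; rfl
  have htail : ∫ t in Ioi 0, F (t + τ) = ∫ t in Ioi τ, F t := by
    have := (measurePreserving_add_right volume τ).setIntegral_preimage_emb
      (measurableEmbedding_addRight τ) F (Ioi τ)
    rwa [show (· + τ) ⁻¹' Ioi τ = Ioi (0 : ℝ) by ext; simp] at this
  have hsplit : T.laplace l z = (∫ t in Ioc 0 τ, F t) + ∫ t in Ioi τ, F t := by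
    rw [laplace, ← setIntegral_union (Ioc_disjoint_Ioi le_rfl) measurableSet_Ioi
      (hF.mono_set Ioc_subset_Ioi_self) (hF.mono_set (Ioi_subset_Ioi hτ.le)),
      Ioc_union_Ioi_eq_Ioi hτ.le]
  calc T.toFun τ (T.laplace l z) = ∫ t in Ioi 0, T.toFun τ (F t) :=
        ((T.toFun τ).integral_comp_comm hF).symm
    _ = Real.exp (l * τ) • ∫ t in Ioi τ, F t := by
        rw [setIntegral_congr_fun measurableSet_Ioi hshift, integral_smul, htail]
    _ = _ := by rw [hsplit, add_sub_cancel_left]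

theorem tendsto_slope_laplace
    (hM : T.HasExpBound M ω) (hl : ω < l) (z : Z) :
    Tendsto (fun τ : ℝ => τ⁻¹ • (T.toFun τ (T.laplace l z) - T.laplace l z)) (𝓝[>] 0)
      (𝓝 (l • T.laplace l z - z)) := by
  have hexp_slope : Tendsto (fun τ : ℝ => τ⁻¹ * (Real.exp (l * τ) - 1)) (𝓝[>] 0) (𝓝 l) := by
    have hd : HasDerivAt (fun τ : ℝ => Real.exp (l * τ)) l 0 := by
      simpa using ((hasDerivAt_id (0 : ℝ)).const_mul l).exp
    rw [hasDerivAt_iff_tendsto_slope] at hd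
    refine (hd.mono_left (nhdsWithin_mono 0 fun τ (hτ : 0 < τ) => hτ.ne')).congr fun τ => ?_
    simp [slope_def_field, div_eq_inv_mul]
  have hexp : Tendsto (fun τ : ℝ => Real.exp (l * τ)) (𝓝[>] 0) (𝓝 1) :=
    ((Real.continuous_exp.comp (continuous_const_mul l)).tendsto' 0 1 (by simp)).mono_left
      nhdsWithin_le_nhds
  have hmean := tendsto_inv_smul_integral_Ioc (T.continuousOn_exp_smul_toFun l z)
  simp only [mul_zero, Real.exp_zero, T.map_zero', one_smul, ContinuousLinearMap.id_apply]
    at hmean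
  have hlim := (hexp_slope.smul_const (T.laplace l z)).sub (hexp.smul hmean)
  rw [one_smul] at hlim
  refine hlim.congr' (eventually_nhdsWithin_of_forall fun τ (hτ : 0 < τ) => ?_)
  dsimp only
  rw [toFun_laplace hM hl z hτ]
  module

theorem IsGenerator.laplace_mem_domain {A : Z →ₗ.[ℝ] Z} (hA : T.IsGenerator A)
    (hM : T.HasExpBound M ω) (hl : ω < l) (z : Z) :
    ∃ h : T.laplace l z ∈ A.domain, A ⟨T.laplace l z, h⟩ = l • T.laplace l z - z := by
  have hlim := tendsto_slope_laplace hM hl z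
  have hmem := (hA.1 _).2 ⟨_, hlim⟩
  exact ⟨hmem, tendsto_nhds_unique (hA.2 ⟨_, hmem⟩) hlim⟩

theorem tendsto_integral_exp_neg_smul_toFun_div
    (hM : T.HasExpBound M ω) (z : Z) :
    Tendsto (fun l : ℝ => ∫ t in Ioi 0, Real.exp (-t) • T.toFun (t / l) z) atTop (𝓝 z) := by
  have hM0 : 0 ≤ M := by
    have := (norm_nonneg _).trans (hM 0 le_rfl)
    rwa [mul_zero, Real.exp_zero, mul_one] at this
  have hmeas : ∀ᶠ l : ℝ in atTop, AEStronglyMeasurable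
      (fun t => Real.exp (-t) • T.toFun (t / l) z) (volume.restrict (Ioi 0)) := by
    filter_upwards [eventually_gt_atTop 0] with l hl
    refine ContinuousOn.aestronglyMeasurable ?_ measurableSet_Ioi
    refine (Real.continuous_exp.comp continuous_neg).continuousOn.smul
      ((T.strongCont' z).comp (continuous_id.div_const l).continuousOn fun t (ht : 0 < t) => ?_)
    exact div_nonneg ht.le hl.le
  have hbound : ∀ᶠ l : ℝ in atTop, ∀ᵐ t ∂(volume.restrict (Ioi 0)),
      ‖Real.exp (-t) • T.toFun (t / l) z‖ ≤ M * ‖z‖ * Real.exp (-2⁻¹ * t) := by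
    filter_upwards [eventually_ge_atTop (max 1 (2 * ω))] with l hl
    filter_upwards [self_mem_ae_restrict measurableSet_Ioi] with t (ht : 0 < t)
    have hl0 : 0 < l := zero_lt_one.trans_le ((le_max_left _ _).trans hl)
    have htl : 0 ≤ t / l := div_nonneg ht.le hl0.le
    have hωt : ω * (t / l) ≤ 2⁻¹ * t := by
      have := mul_le_mul_of_nonneg_right ((le_max_right _ _).trans hl) htl
      rw [mul_assoc, mul_div_cancel₀ _ hl0.ne'] at this
      linarith
    calc ‖Real.exp (-t) • T.toFun (t / l) z‖
        ≤ Real.exp (-t) * (M * Real.exp (ω * (t / l)) * ‖z‖) := by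
          rw [norm_smul, Real.norm_of_nonneg (Real.exp_pos _).le]
          gcongr
          exact (T.toFun _).le_of_opNorm_le (hM _ htl) z
      _ = M * ‖z‖ * Real.exp (-t + ω * (t / l)) := by rw [Real.exp_add]; ring
      _ ≤ M * ‖z‖ * Real.exp (-2⁻¹ * t) := by gcongr; linarith
  have hlim : ∀ᵐ t ∂(volume.restrict (Ioi 0)), Tendsto
      (fun l : ℝ => Real.exp (-t) • T.toFun (t / l) z) atTop (𝓝 (Real.exp (-t) • z)) := by
    filter_upwards [self_mem_ae_restrict measurableSet_Ioi] with t (ht : 0 < t)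
    have hdiv : Tendsto (fun l : ℝ => t / l) atTop (𝓝[Ici 0] 0) :=
      tendsto_nhdsWithin_iff.2 ⟨tendsto_const_nhds.div_atTop tendsto_id,
        (eventually_gt_atTop 0).mono fun l hl => div_nonneg ht.le hl.le⟩
    have hcont := ((T.strongCont' z).continuousWithinAt self_mem_Ici).tendsto.comp hdiv
    rw [T.map_zero', ContinuousLinearMap.id_apply] at hcont
    exact hcont.const_smul _
  have hdom := tendsto_integral_filter_of_dominated_convergence _ hmeas hbound
    ((exp_neg_integrableOn_Ioi 0 (by norm_num)).const_mul _) hlim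
  rwa [integral_smul_const, integral_exp_neg_Ioi_zero, one_smul] at hdom

theorem tendsto_smul_laplace_atTop (hM : T.HasExpBound M ω)
    (z : Z) : Tendsto (fun l => l • T.laplace l z) atTop (𝓝 z) :=
  (tendsto_integral_exp_neg_smul_toFun_div hM z).congr'
    ((eventually_gt_atTop 0).mono fun _ hl => (smul_laplace_eq_integral hl z).symm)

end C0Semigroup

theorem C0Semigroup.laplace_map_of_intertwining {X Y : Type*} [NormedAddCommGroup X]
    [NormedSpace ℝ X] [CompleteSpace X] [NormedAddCommGroup Y] [NormedSpace ℝ Y] [CompleteSpace Y]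
    {T : C0Semigroup X} {S : C0Semigroup Y} {M ω l : ℝ} (j : X →L[ℝ] Y)
    (hTS : ∀ t : ℝ, 0 ≤ t → ∀ x : X, S.toFun t (j x) = j (T.toFun t x))
    (hM : T.HasExpBound M ω) (hl : ω < l) (x : X) :
    S.laplace l (j x) = j (T.laplace l x) := by
  rw [laplace, laplace, ← j.integral_comp_comm (integrableOn_exp_smul_toFun hM hl x)]
  refine setIntegral_congr_fun measurableSet_Ioi fun t (ht : 0 < t) => ?_
  rw [hTS t ht.le, map_smul]

theorem C0Semigroup.laplace_nonneg {X : Type*} [NormedAddCommGroup X] [Lattice X]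
    [HasSolidNorm X] [IsOrderedAddMonoid X] [NormedSpace ℝ X] {T : C0Semigroup X}
    (hT : ∀ t : ℝ, 0 ≤ t → ∀ x : X, 0 ≤ x → 0 ≤ T.toFun t x) (l : ℝ) {x : X} (hx : 0 ≤ x) :
    0 ≤ T.laplace l x := by
  refine integral_nonneg_of_ae ?_
  filter_upwards [self_mem_ae_restrict measurableSet_Ioi] with t (ht : 0 < t)
  exact smul_nonneg (Real.exp_pos _).le (hT t ht.le x hx)

theorem IsResolventAt.eq_laplace {Z : Type*} [NormedAddCommGroup Z] [NormedSpace ℝ Z]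
    [CompleteSpace Z] {T : C0Semigroup Z} {A : Z →ₗ.[ℝ] Z} {M ω l : ℝ} {R : Z →L[ℝ] Z}
    (hR : IsResolventAt A l R) (hA : T.IsGenerator A)
    (hM : T.HasExpBound M ω) (hl : ω < l) (z : Z) :
    R z = T.laplace l z := by
  obtain ⟨hmem, hAv⟩ := hA.laplace_mem_domain hM hl z
  simpa [hAv] using hR.2 ⟨_, hmem⟩

theorem IsResolventAt.apply_eq_add_smul {Z : Type*} [NormedAddCommGroup Z] [NormedSpace ℝ Z]
    {A : Z →ₗ.[ℝ] Z} {l m : ℝ} {Rl Rm : Z →L[ℝ] Z} (hl : IsResolventAt A l Rl)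
    (hm : IsResolventAt A m Rm) (y : Z) : Rm y = Rl y + (l - m) • Rl (Rm y) := by
  obtain ⟨hmem, hy⟩ := hm.1 y
  have h := hl.2 ⟨Rm y, hmem⟩
  rw [show l • Rm y - A ⟨Rm y, hmem⟩ = y + (l - m) • Rm y by
    linear_combination (norm := module) hy] at h
  simpa using h.symm

def IsPseudoResolvent {E : Type*} [NormedAddCommGroup E] [NormedSpace ℝ E]
    (P : ℝ → E →L[ℝ] E) (s : ℝ) : Prop :=
  ∀ l m, s < l → s < m → P m = P l + (l - m) • (P l).comp (P m)

theorem IsPseudoResolvent.norm_le_two_mul {E : Type*} [NormedAddCommGroup E] [NormedSpace ℝ E]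
    {P : ℝ → E →L[ℝ] E} {s m p : ℝ} (hP : IsPseudoResolvent P s) (hm : s < m) (hmp : m ≤ p)
    (hsmall : (p - m) * ‖P m‖ ≤ 2⁻¹) : ‖P p‖ ≤ 2 * ‖P m‖ := by
  have h : ‖P p‖ ≤ ‖P m‖ + (p - m) * (‖P m‖ * ‖P p‖) := by
    calc ‖P p‖ = ‖P m + (m - p) • (P m).comp (P p)‖ := by
          rw [← hP m p hm (hm.trans_le hmp)]
      _ ≤ ‖P m‖ + (p - m) * (‖P m‖ * ‖P p‖) := by
        refine (norm_add_le _ _).trans (add_le_add_right ?_ _)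
        rw [norm_smul, Real.norm_eq_abs, abs_of_nonpos (by linarith), neg_sub]
        gcongr
        exact ContinuousLinearMap.opNorm_comp_le _ _
  nlinarith [norm_nonneg (P p)]

theorem isPseudoResolvent_comp_of_isResolventAt {X Y : Type*} [NormedAddCommGroup X]
    [NormedSpace ℝ X] [NormedAddCommGroup Y] [NormedSpace ℝ Y] {A : Y →ₗ.[ℝ] Y} {j : X →L[ℝ] Y}
    (hj : Function.Injective j) {s : ℝ} {R : ℝ → Y →L[ℝ] X}
    (hR : ∀ l : ℝ, s < l → IsResolventAt A l (j.comp (R l))) :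
    IsPseudoResolvent (fun l => (R l).comp j) s := fun l m hl hm => by
  ext x
  apply hj
  simpa using (hR l hl).apply_eq_add_smul (hR m hm) (j x)

section PseudoResolventPositivity

variable {X : Type*} [NormedAddCommGroup X] [Lattice X] [HasSolidNorm X] [IsOrderedAddMonoid X]
  [NormedSpace ℝ X]
  {P : ℝ → X →L[ℝ] X} {s : ℝ}

theorem IsPseudoResolvent.exists_downward_mapsTo_nonneg (hP : IsPseudoResolvent P s) {m : ℝ}
    (hm : s < m) : ∃ η > 0, ∀ p, m < p → p < m + η → MapsTo (P p) (Ici 0) (Ici 0) →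
      ∀ l, s < l → m - η < l → l ≤ p → MapsTo (P l) (Ici 0) (Ici 0) := by
  set N := ‖P m‖
  have hN : 0 ≤ N := norm_nonneg _
  refine ⟨(4 * (N + 1))⁻¹, by positivity, fun p hmp hpη hPp l hl hlη hlp => ?_⟩
  have hη : (4 * (N + 1))⁻¹ * (4 * (N + 1)) = 1 := inv_mul_cancel₀ (by positivity)
  have hnorm : ‖P p‖ ≤ 2 * N := hP.norm_le_two_mul hm hmp.le (by nlinarith)
  refine mapsTo_nonneg_of_eq_add_smul_comp hPp (sub_nonneg.2 hlp) ?_ (hP p l (hm.trans hmp) hl)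
  nlinarith [norm_nonneg (P p)]

theorem IsPseudoResolvent.mapsTo_nonneg (hP : IsPseudoResolvent P s) {ω : ℝ}
    (hω : ∀ l, ω < l → MapsTo (P l) (Ici 0) (Ici 0)) {l₀ : ℝ} (hl₀ : s < l₀) :
    MapsTo (P l₀) (Ici 0) (Ici 0) := by
  by_contra hneg
  set S := {l | l₀ ≤ l ∧ ¬ MapsTo (P l) (Ici 0) (Ici 0)}
  have hS : S.Nonempty := ⟨l₀, le_rfl, hneg⟩
  have hbdd : BddAbove S := ⟨ω, fun l hl => not_lt.1 fun h => hl.2 (hω l h)⟩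
  set a := sSup S
  have hl₀a : l₀ ≤ a := le_csSup hbdd ⟨le_rfl, hneg⟩
  obtain ⟨η, hη, hstep⟩ := hP.exists_downward_mapsTo_nonneg (hl₀.trans_le hl₀a)
  have hpos : MapsTo (P (a + η / 2)) (Ici 0) (Ici 0) := by
    by_contra h
    linarith [le_csSup hbdd ⟨by linarith, h⟩]
  obtain ⟨l, ⟨hl₀l, hl⟩, hal⟩ := exists_lt_of_lt_csSup hS (sub_lt_self a hη)
  exact hl (hstep _ (by linarith) (by linarith) hpos l (hl₀.trans_le hl₀l) hal
    ((le_csSup hbdd ⟨hl₀l, hl⟩).trans (by linarith)))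

end PseudoResolventPositivity

theorem positive_B_iff_positive_resolvent_B_general
    {X U Xm1 : Type*}
    [NormedAddCommGroup X] [Lattice X] [HasSolidNorm X] [IsOrderedAddMonoid X] [NormedSpace ℝ X] [CompleteSpace X]
    [NormedAddCommGroup U] [Lattice U] [NormedSpace ℝ U]
    [NormedAddCommGroup Xm1] [NormedSpace ℝ Xm1] [CompleteSpace Xm1]
    (Tsg : C0Semigroup X)
    (hTpos : ∀ t : ℝ, 0 ≤ t → ∀ x : X, 0 ≤ x → 0 ≤ Tsg.toFun t x)
    (j : X →L[ℝ] Xm1) (hj : Function.Injective j)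
    (Tm1 : C0Semigroup Xm1)
    (hTm1 : ∀ t : ℝ, 0 ≤ t → ∀ x : X, Tm1.toFun t (j x) = j (Tsg.toFun t x))
    (Am1 : Xm1 →ₗ.[ℝ] Xm1) (hAm1 : Tm1.IsGenerator Am1)
    (s : ℝ) (R : ℝ → Xm1 →L[ℝ] X)
    (hR : ∀ l : ℝ, s < l → IsResolventAt Am1 l (j.comp (R l)))
    (B : U →ₗ[ℝ] Xm1) :
    (∀ u : U, 0 ≤ u → B u ∈ closure (j '' {x : X | 0 ≤ x})) ↔
      (∀ l : ℝ, s < l → ∀ u : U, 0 ≤ u → 0 ≤ R l (B u)) := by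
  obtain ⟨M₁, ω₁, hM₁⟩ := Tsg.exists_hasExpBound
  obtain ⟨M₂, ω₂, hM₂⟩ := Tm1.exists_hasExpBound
  have hlaplace : ∀ l, s < l → ω₂ < l → ∀ y, j (R l y) = Tm1.laplace l y :=
    fun l hsl hl => (hR l hsl).eq_laplace hAm1 hM₂ hl
  have hpseudo := isPseudoResolvent_comp_of_isResolventAt hj hR
  have hpos : ∀ l, s < l → MapsTo ((R l).comp j) (Ici 0) (Ici 0) := by
    refine fun l hl => hpseudo.mapsTo_nonneg (ω := max s (max ω₁ ω₂)) (fun m hm x hx => ?_) hl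
    simp only [max_lt_iff] at hm
    have hRx : R m (j x) = Tsg.laplace m x := by
      apply hj
      rw [hlaplace m hm.1 hm.2.2, C0Semigroup.laplace_map_of_intertwining j hTm1 hM₁ hm.2.1]
    exact hRx ▸ Tsg.laplace_nonneg hTpos m hx
  constructor
  · intro hB l hl u hu
    have hRl : MapsTo (R l) (j '' Ici 0) (Ici 0) := by
      rintro _ ⟨x, hx, rfl⟩
      exact hpos l hl hx
    simpa using hRl.closure (R l).continuous (hB u hu)
  · intro hB u hu
    refine mem_closure_of_tendsto (Tm1.tendsto_smul_laplace_atTop hM₂ (B u)) ?_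
    filter_upwards [eventually_gt_atTop (max s ω₂), eventually_gt_atTop 0] with l hl hl0
    rw [max_lt_iff] at hl
    exact ⟨l • R l (B u), smul_nonneg hl0.le (hB l hl.1 u hu), by
      rw [map_smul, hlaplace l hl.1 hl.2]⟩

/-- Let `A` generate a positive `C₀`-semigroup on a Banach lattice `X`, with
extrapolation space `X₋₁` (given by a continuous dense injection `j : X → X₋₁`,
the extended semigroup `T₋₁` and its generator `A₋₁`), and let `X₋₁,₊` be the
closure of `j(X₊)`.  A linear operator `B : U → X₋₁` is positive
(`B U₊ ⊆ X₋₁,₊`) iff `R(λ, A₋₁) B : U → X` is positive for all `λ > s(A)`,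
where `s` is the spectral bound (so that the resolvent exists for `λ > s`). -/
theorem positive_B_iff_positive_resolvent_B
    {X U Xm1 : Type*}
    [NormedAddCommGroup X] [Lattice X] [HasSolidNorm X] [IsOrderedAddMonoid X] [NormedSpace ℝ X] [CompleteSpace X]
    [NormedAddCommGroup U] [Lattice U] [HasSolidNorm U] [IsOrderedAddMonoid U] [NormedSpace ℝ U] [CompleteSpace U]
    [NormedAddCommGroup Xm1] [NormedSpace ℝ Xm1] [CompleteSpace Xm1]
    (Tsg : C0Semigroup X)
    (hTpos : ∀ t : ℝ, 0 ≤ t → ∀ x : X, 0 ≤ x → 0 ≤ Tsg.toFun t x)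
    (A : X →ₗ.[ℝ] X) (hA : Tsg.IsGenerator A)
    (j : X →L[ℝ] Xm1) (hj : Function.Injective j) (hjd : DenseRange j)
    (Tm1 : C0Semigroup Xm1)
    (hTm1 : ∀ t : ℝ, 0 ≤ t → ∀ x : X, Tm1.toFun t (j x) = j (Tsg.toFun t x))
    (Am1 : Xm1 →ₗ.[ℝ] Xm1) (hAm1 : Tm1.IsGenerator Am1)
    (s : ℝ) (R : ℝ → Xm1 →L[ℝ] X)
    (hR : ∀ l : ℝ, s < l → IsResolventAt Am1 l (j.comp (R l)))
    (B : U →ₗ[ℝ] Xm1) :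
    (∀ u : U, 0 ≤ u → B u ∈ closure (j '' {x : X | 0 ≤ x})) ↔
      (∀ l : ℝ, s < l → ∀ u : U, 0 ≤ u → 0 ≤ R l (B u)) :=
  positive_B_iff_positive_resolvent_B_general Tsg hTpos j hj Tm1 hTm1 Am1 hAm1 s R hR B
end

section
/- Let A generate a positive C₀-semigroup (T(t)) with negative growth bound on a Banach lattice X, U an AL-space, and C : D(A) → U a positive linear operator. Then C is 1-admissible for every t > 0; more precisely, ∫₀ᵗ ‖C T(s) x‖_U ds ≤ ‖C A^{−1}‖_{L(X,U)} ‖x‖_X for all x ∈ D(A) and all t > 0. -/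
open Filter Topology Set MeasureTheory

/-- `U` is an AL-space. -/
def IsALSpace (U : Type*) [NormedAddCommGroup U] [Lattice U] [HasSolidNorm U] [IsOrderedAddMonoid U] : Prop :=
  ∀ x y : U, 0 ≤ x → 0 ≤ y → ‖x + y‖ = ‖x‖ + ‖y‖

/-!
On `D(A)` we have `C = K A`, and `K = -C R(0, A)` maps `X₊` into `-U₊` because
`R(0, A) = ∫₀^∞ T(s) ds` is positive. For `c ∈ D(A)₊` the integrand `C T(s) c = K T(s) A c` is
positive, and since the norm of the AL-space `U` is linear on `U₊`,
`∫₀ᵗ ‖K T(s) A c‖ ds = ‖K c‖ - ‖K T(t) c‖ ≤ ‖K c‖`.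
For general `x ∈ D(A)`, let `a_h, b_h` be the averages of `T(s) x⁺, T(s) x⁻` over `[0, h]`.
They lie in `D(A)₊`, with `A (a_h - b_h) = (T(h) x - x) / h → A x` and `a_h + b_h → |x|`, and
`‖K T(s) A (a_h - b_h)‖ ≤ ‖K T(s) A a_h‖ + ‖K T(s) A b_h‖ = ‖K T(s) A (a_h + b_h)‖`; letting
`h → 0` bounds the integral by `‖K |x|‖ ≤ ‖K‖ ‖x‖`.
-/

theorem nonneg_of_two_pow_nsmul_nonneg {α : Type*} [Lattice α] [AddCommGroup α]
    [IsOrderedAddMonoid α] {a : α} : ∀ {k : ℕ}, 0 ≤ 2 ^ k • a → 0 ≤ a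
  | 0, h => by simpa using h
  | k + 1, h =>
    nonneg_of_two_pow_nsmul_nonneg (nsmul_two_semiclosed (by rwa [← mul_nsmul, ← pow_succ]))

-- The positive cone is closed and stable under dyadic scalings, and dyadics are dense.
instance HasSolidNorm.isOrderedModule {E : Type*} [NormedAddCommGroup E] [Lattice E]
    [HasSolidNorm E] [IsOrderedAddMonoid E] [NormedSpace ℝ E] : IsOrderedModule ℝ E :=
  .of_smul_nonneg fun c hc v hv => by
    have hdyadic (k : ℕ) : 0 ≤ ((⌊c * 2 ^ k⌋₊ : ℝ) / 2 ^ k) • v := by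
      refine nonneg_of_two_pow_nsmul_nonneg (k := k) ?_
      rw [← Nat.cast_smul_eq_nsmul ℝ, smul_smul, Nat.cast_pow, Nat.cast_ofNat,
        mul_div_cancel₀ _ (by positivity), Nat.cast_smul_eq_nsmul]
      exact nsmul_nonneg hv _
    have hlim : Tendsto (fun k : ℕ => ((⌊c * 2 ^ k⌋₊ : ℝ) / 2 ^ k) • v) atTop (𝓝 (c • v)) :=
      ((tendsto_nat_floor_mul_div_atTop hc).comp
        (tendsto_pow_atTop_atTop_of_one_lt one_lt_two)).smul_const v
    exact isClosed_nonneg.mem_of_tendsto hlim (.of_forall hdyadic)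

namespace IsALSpace

variable {U : Type*} [NormedAddCommGroup U] [Lattice U] [HasSolidNorm U] [IsOrderedAddMonoid U]

theorem norm_posPart_add_norm_negPart (hU : IsALSpace U) (u : U) : ‖u⁺‖ + ‖u⁻‖ = ‖u‖ := by
  rw [← hU _ _ (posPart_nonneg u) (negPart_nonneg u), posPart_add_negPart, norm_abs_eq_norm]

theorem norm_posPart_sub_norm_negPart_add (hU : IsALSpace U) (u v : U) :
    ‖(u + v)⁺‖ - ‖(u + v)⁻‖ = (‖u⁺‖ - ‖u⁻‖) + (‖v⁺‖ - ‖v⁻‖) := by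
  have hparts : (u + v)⁺ + (u⁻ + v⁻) = (u + v)⁻ + (u⁺ + v⁺) := by
    rw [← sub_eq_zero]
    calc (u + v)⁺ + (u⁻ + v⁻) - ((u + v)⁻ + (u⁺ + v⁺))
        = ((u + v)⁺ - (u + v)⁻) - ((u⁺ - u⁻) + (v⁺ - v⁻)) := by abel
      _ = 0 := by rw [posPart_sub_negPart, posPart_sub_negPart, posPart_sub_negPart, sub_self]
  have hnorm := congrArg norm hparts
  rw [hU _ _ (posPart_nonneg _) (add_nonneg (negPart_nonneg _) (negPart_nonneg _)),
    hU _ _ (negPart_nonneg _) (add_nonneg (posPart_nonneg _) (posPart_nonneg _)),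
    hU _ _ (negPart_nonneg _) (negPart_nonneg _), hU _ _ (posPart_nonneg _) (posPart_nonneg _)]
    at hnorm
  linarith

variable [NormedSpace ℝ U]

noncomputable def normFunctional (hU : IsALSpace U) : U →L[ℝ] ℝ :=
  (AddMonoidHom.mk' (fun u => ‖u⁺‖ - ‖u⁻‖) hU.norm_posPart_sub_norm_negPart_add).toRealLinearMap <|
    AddMonoidHomClass.continuous_of_bound _ 1 fun u => by
      have := hU.norm_posPart_add_norm_negPart u
      simp only [AddMonoidHom.mk'_apply, Real.norm_eq_abs, one_mul, abs_le]
      constructor <;> linarith [norm_nonneg u⁺, norm_nonneg u⁻]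

theorem normFunctional_apply (hU : IsALSpace U) (u : U) :
    hU.normFunctional u = ‖u⁺‖ - ‖u⁻‖ := rfl

theorem normFunctional_of_nonneg (hU : IsALSpace U) {u : U} (hu : 0 ≤ u) :
    hU.normFunctional u = ‖u‖ := by
  rw [normFunctional_apply, posPart_of_nonneg hu, negPart_of_nonneg hu, norm_zero, sub_zero]

theorem normFunctional_of_nonpos (hU : IsALSpace U) {u : U} (hu : u ≤ 0) :
    hU.normFunctional u = -‖u‖ := by
  have := hU.normFunctional_of_nonneg (neg_nonneg.2 hu)
  rw [map_neg, norm_neg] at this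
  linarith

end IsALSpace

theorem hasDerivWithinAt_Ioi_iff_tendsto_slope_zero_right {E : Type*} [NormedAddCommGroup E]
    [NormedSpace ℝ E] {f : ℝ → E} {f' : E} {x : ℝ} :
    HasDerivWithinAt f f' (Ioi x) x ↔
      Tendsto (fun t => t⁻¹ • (f (x + t) - f x)) (𝓝[>] 0) (𝓝 f') := by
  have : 𝓝[>] x = map (x + ·) (𝓝[>] 0) := by simp [Filter.map_add_left_nhdsGT]
  rw [hasDerivWithinAt_iff_tendsto_slope' (by simp : x ∉ Ioi x), this, tendsto_map'_iff]
  simp [slope, Function.comp_def]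

namespace C0Semigroup

section Basic

variable {X : Type*} [NormedAddCommGroup X] [NormedSpace ℝ X] (T : C0Semigroup X)

theorem toFun_zero_apply (x : X) : T.toFun 0 x = x := by
  rw [T.map_zero']; rfl

theorem toFun_add_apply {s r : ℝ} (hs : 0 ≤ s) (hr : 0 ≤ r) (x : X) :
    T.toFun (s + r) x = T.toFun s (T.toFun r x) := by
  rw [T.map_add' s r hs hr]; rfl

theorem intervalIntegrable_comp_toFun {E : Type*} [NormedAddCommGroup E] {g : X → E}
    (hg : Continuous g) {a b : ℝ} (ha : 0 ≤ a) (hb : 0 ≤ b) (x : X) :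
    IntervalIntegrable (fun s => g (T.toFun s x)) volume a b :=
  (hg.comp_continuousOn <| (T.strongCont' x).mono fun _ hs => (le_min ha hb).trans hs.1)
    |>.intervalIntegrable

theorem intervalIntegrable_toFun_apply {a b : ℝ} (ha : 0 ≤ a) (hb : 0 ≤ b) (x : X) :
    IntervalIntegrable (fun s => T.toFun s x) volume a b :=
  T.intervalIntegrable_comp_toFun continuous_id ha hb x

variable {T}

theorem NegGrowthBound.exists_norm_le (hT : T.NegGrowthBound) :
    ∃ M, ∀ s, 0 ≤ s → ‖T.toFun s‖ ≤ M := by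
  obtain ⟨ε, hε, M, hM⟩ := hT
  refine ⟨|M|, fun s hs => (hM s hs).trans ?_⟩
  calc M * Real.exp (-ε * s) ≤ |M| * Real.exp (-ε * s) := by gcongr; exact le_abs_self M
    _ ≤ |M| * 1 := by gcongr; exact Real.exp_le_one_iff.2 (by nlinarith)
    _ = |M| := mul_one _

theorem NegGrowthBound.tendsto_toFun_apply_atTop (hT : T.NegGrowthBound) (x : X) :
    Tendsto (fun t => T.toFun t x) atTop (𝓝 0) := by
  obtain ⟨ε, hε, M, hM⟩ := hT
  have hexp : Tendsto (fun t => M * Real.exp (-ε * t) * ‖x‖) atTop (𝓝 0) := by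
    simpa using ((Real.tendsto_exp_atBot.comp
      (tendsto_id.const_mul_atTop_of_neg (neg_neg_of_pos hε))).const_mul M).mul_const ‖x‖
  refine squeeze_zero_norm' ?_ hexp
  filter_upwards [eventually_ge_atTop 0] with t ht
  exact (T.toFun t).le_of_opNorm_le (hM t ht) x

theorem continuous_integral_norm_comp_toFun {U : Type*} [NormedAddCommGroup U] [NormedSpace ℝ U]
    {M : ℝ} (hM : ∀ s, 0 ≤ s → ‖T.toFun s‖ ≤ M) {t : ℝ} (ht : 0 ≤ t) (K : X →L[ℝ] U) :
    Continuous fun v => ∫ s in 0..t, ‖K (T.toFun s v)‖ := by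
  have hint (y : X) := T.intervalIntegrable_comp_toFun K.continuous.norm le_rfl ht y
  refine (LipschitzWith.of_le_add_mul' (t * (‖K‖ * M)) fun v w => ?_).continuous
  calc ∫ s in 0..t, ‖K (T.toFun s v)‖
      ≤ ∫ s in 0..t, (‖K (T.toFun s w)‖ + ‖K‖ * (M * ‖v - w‖)) := by
        refine intervalIntegral.integral_mono_on ht (hint v) ((hint w).add intervalIntegrable_const)
          fun s hs => (norm_le_insert' _ _).trans (add_le_add le_rfl ?_)
        rw [← map_sub, ← map_sub]
        exact (K.le_opNorm _).trans (mul_le_mul_of_nonneg_left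
          ((T.toFun s).le_of_opNorm_le (hM s hs.1) _) (norm_nonneg K))
    _ = (∫ s in 0..t, ‖K (T.toFun s w)‖) + t * (‖K‖ * M) * dist v w := by
        rw [intervalIntegral.integral_add (hint w) intervalIntegrable_const,
          intervalIntegral.integral_const, smul_eq_mul, sub_zero, dist_eq_norm]
        ring

variable (T) in
noncomputable def average (h : ℝ) (x : X) : X := h⁻¹ • ∫ r in 0..h, T.toFun r x

variable {A : X →ₗ.[ℝ] X}

theorem IsGenerator.exists_apply_eq_of_tendsto (hA : T.IsGenerator A) {x y : X}
    (h : Tendsto (fun t => t⁻¹ • (T.toFun t x - x)) (𝓝[>] 0) (𝓝 y)) :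
    ∃ hx : x ∈ A.domain, A ⟨x, hx⟩ = y :=
  ⟨(hA.1 x).2 ⟨y, h⟩, tendsto_nhds_unique (hA.2 _) h⟩

theorem hasDerivWithinAt_toFun_apply (hA : T.IsGenerator A) {s : ℝ} (hs : 0 ≤ s)
    (z : A.domain) : HasDerivWithinAt (fun r => T.toFun r z) (T.toFun s (A z)) (Ioi s) s := by
  rw [hasDerivWithinAt_Ioi_iff_tendsto_slope_zero_right]
  refine (((T.toFun s).continuous.tendsto _).comp (hA.2 z)).congr' ?_
  filter_upwards [self_mem_nhdsWithin] with r (hr : 0 < r)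
  simp [T.toFun_add_apply hs hr.le]

theorem exists_generator_toFun_apply (hA : T.IsGenerator A) {s : ℝ} (hs : 0 ≤ s)
    (z : A.domain) : ∃ hz : T.toFun s z ∈ A.domain, A ⟨T.toFun s z, hz⟩ = T.toFun s (A z) := by
  refine hA.exists_apply_eq_of_tendsto <| (hasDerivWithinAt_Ioi_iff_tendsto_slope_zero_right.1
    (hasDerivWithinAt_toFun_apply hA hs z)).congr' ?_
  filter_upwards [self_mem_nhdsWithin] with r (hr : 0 < r)
  rw [add_comm, T.toFun_add_apply hr.le hs]

end Basic

section Complete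

variable {X : Type*} [NormedAddCommGroup X] [NormedSpace ℝ X] [CompleteSpace X]
  {T : C0Semigroup X} {A : X →ₗ.[ℝ] X}

theorem integral_toFun_generator (hA : T.IsGenerator A) {t : ℝ} (ht : 0 ≤ t) (z : A.domain) :
    ∫ s in 0..t, T.toFun s (A z) = T.toFun t z - z := by
  rw [intervalIntegral.integral_eq_sub_of_hasDeriv_right_of_le ht
    ((T.strongCont' z).mono Icc_subset_Ici_self)
    (fun s hs => hasDerivWithinAt_toFun_apply hA hs.1.le z)
    (T.intervalIntegrable_toFun_apply le_rfl ht _), T.toFun_zero_apply]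

variable (T) in
theorem hasDerivWithinAt_integral_toFun_apply {c : ℝ} (hc : 0 ≤ c) (x : X) :
    HasDerivWithinAt (fun u => ∫ r in 0..u, T.toFun r x) (T.toFun c x) (Ioi c) c := by
  have hcont : ContinuousOn (fun r => T.toFun r x) (Ioi c) :=
    (T.strongCont' x).mono fun _ hr => hc.trans (le_of_lt hr)
  exact (intervalIntegral.integral_hasDerivWithinAt_right (s := Ici c) (t := Ioi c)
    (T.intervalIntegrable_toFun_apply le_rfl hc x)
    (hcont.stronglyMeasurableAtFilter_nhdsWithin measurableSet_Ioi c)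
    ((T.strongCont' x c hc).mono fun _ hr => hc.trans (le_of_lt hr))).mono Ioi_subset_Ici_self

variable (T) in
theorem toFun_integral_toFun_apply {s h : ℝ} (hs : 0 ≤ s) (hh : 0 ≤ h) (x : X) :
    T.toFun s (∫ r in 0..h, T.toFun r x) = ∫ r in s..s + h, T.toFun r x := by
  have hshift := intervalIntegral.integral_comp_add_left (fun r => T.toFun r x) s (a := 0) (b := h)
  rw [add_zero] at hshift
  rw [← (T.toFun s).intervalIntegral_comp_comm (T.intervalIntegrable_toFun_apply le_rfl hh x),
    ← hshift]
  refine intervalIntegral.integral_congr fun r hr => ?_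
  rw [uIcc_of_le hh] at hr
  exact (T.toFun_add_apply hs hr.1 x).symm

theorem exists_generator_integral_toFun (hA : T.IsGenerator A) {h : ℝ} (hh : 0 ≤ h) (x : X) :
    ∃ hw : (∫ r in 0..h, T.toFun r x) ∈ A.domain,
      A ⟨∫ r in 0..h, T.toFun r x, hw⟩ = T.toFun h x - x := by
  have hslope (c : ℝ) (hc : 0 ≤ c) := hasDerivWithinAt_Ioi_iff_tendsto_slope_zero_right.1
    (T.hasDerivWithinAt_integral_toFun_apply hc x)
  have hlim := (hslope h hh).sub (hslope 0 le_rfl)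
  rw [T.toFun_zero_apply] at hlim
  refine hA.exists_apply_eq_of_tendsto (hlim.congr' ?_)
  filter_upwards [self_mem_nhdsWithin] with r (hr : 0 < r)
  rw [T.toFun_integral_toFun_apply hr.le hh, ← smul_sub,
    ← intervalIntegral.integral_interval_sub_left
      (T.intervalIntegrable_toFun_apply le_rfl (by positivity) x)
      (T.intervalIntegrable_toFun_apply le_rfl hr.le x),
    intervalIntegral.integral_same, sub_zero, zero_add, add_comm r h, sub_right_comm]

theorem tendsto_average (x : X) : Tendsto (fun h => T.average h x) (𝓝[>] 0) (𝓝 x) := by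
  simpa [average, T.toFun_zero_apply] using hasDerivWithinAt_Ioi_iff_tendsto_slope_zero_right.1
    (T.hasDerivWithinAt_integral_toFun_apply le_rfl x)

theorem exists_generator_average (hA : T.IsGenerator A) {h : ℝ} (hh : 0 ≤ h) (x : X) :
    ∃ hw : T.average h x ∈ A.domain, A ⟨T.average h x, hw⟩ = h⁻¹ • (T.toFun h x - x) := by
  obtain ⟨hw, hAw⟩ := exists_generator_integral_toFun hA hh x
  exact ⟨A.domain.smul_mem h⁻¹ hw, by rw [← hAw, ← A.map_smul]; rfl⟩

end Complete

section Positive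

variable {X U : Type*} [NormedAddCommGroup X] [NormedSpace ℝ X] [Preorder X]
  [NormedAddCommGroup U] [NormedSpace ℝ U] [Preorder U]

def IsPositive (T : C0Semigroup X) : Prop := ∀ s : ℝ, 0 ≤ s → ∀ x : X, 0 ≤ x → 0 ≤ T.toFun s x

theorem IsPositive.comp_toFun_generator_nonneg {T : C0Semigroup X} {A : X →ₗ.[ℝ] X}
    {K : X →L[ℝ] U} (hT : T.IsPositive) (hA : T.IsGenerator A)
    (hKA : ∀ z : A.domain, 0 ≤ (z : X) → 0 ≤ K (A z)) {s : ℝ} (hs : 0 ≤ s) {z : A.domain}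
    (hz : 0 ≤ (z : X)) : 0 ≤ K (T.toFun s (A z)) := by
  obtain ⟨_, hAz⟩ := exists_generator_toFun_apply hA hs z
  exact hAz ▸ hKA _ (hT s hs z hz)

end Positive

section Lattice

variable {X : Type*} [NormedAddCommGroup X] [Lattice X] [HasSolidNorm X] [IsOrderedAddMonoid X]
  [NormedSpace ℝ X] {T : C0Semigroup X}

theorem IsPositive.integral_toFun_nonneg (hT : T.IsPositive) {t : ℝ} (ht : 0 ≤ t) {x : X}
    (hx : 0 ≤ x) : 0 ≤ ∫ s in 0..t, T.toFun s x := by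
  rw [intervalIntegral.integral_of_le ht]
  exact integral_nonneg_of_ae <|
    (ae_restrict_iff' measurableSet_Ioc).2 (.of_forall fun s hs => hT s hs.1.le x hx)

theorem IsPositive.average_nonneg (hT : T.IsPositive) {h : ℝ} (hh : 0 ≤ h) {x : X}
    (hx : 0 ≤ x) : 0 ≤ T.average h x :=
  smul_nonneg (inv_nonneg.2 hh) (hT.integral_toFun_nonneg hh hx)

end Lattice

end C0Semigroup

namespace IsResolventAt

variable {X : Type*} [NormedAddCommGroup X] [NormedSpace ℝ X] {A : X →ₗ.[ℝ] X} {R : X →L[ℝ] X}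

theorem exists_generator_apply (hR : IsResolventAt A 0 R) (v : X) :
    ∃ h : R v ∈ A.domain, A ⟨R v, h⟩ = -v := by
  obtain ⟨h, hv⟩ := hR.1 v
  rw [zero_smul, zero_sub] at hv
  exact ⟨h, neg_eq_iff_eq_neg.1 hv⟩

theorem apply_generator (hR : IsResolventAt A 0 R) (z : A.domain) : R (A z) = -z := by
  have := hR.2 z
  rwa [zero_smul, zero_sub, map_neg, neg_eq_iff_eq_neg] at this

theorem nonneg_of_nonneg [Lattice X] [HasSolidNorm X] [IsOrderedAddMonoid X] [CompleteSpace X]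
    {T : C0Semigroup X} (hR : IsResolventAt A 0 R) (hT : T.IsPositive) (hω : T.NegGrowthBound)
    (hA : T.IsGenerator A) {v : X} (hv : 0 ≤ v) : 0 ≤ R v := by
  obtain ⟨hd, hRv⟩ := hR.exists_generator_apply v
  have hpartial (t : ℝ) (ht : 0 ≤ t) : R v - T.toFun t (R v) = ∫ s in 0..t, T.toFun s v := by
    have := C0Semigroup.integral_toFun_generator hA ht ⟨R v, hd⟩
    simp only [hRv, map_neg, intervalIntegral.integral_neg] at this
    rw [← neg_sub, ← this, neg_neg]
  have hlim : Tendsto (fun t => R v - T.toFun t (R v)) atTop (𝓝 (R v)) := by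
    simpa using tendsto_const_nhds.sub (hω.tendsto_toFun_apply_atTop (R v))
  refine isClosed_nonneg.mem_of_tendsto hlim ?_
  filter_upwards [eventually_ge_atTop 0] with t ht
  exact (hpartial t ht).symm ▸ hT.integral_toFun_nonneg ht hv

end IsResolventAt

namespace C0Semigroup

variable {X U : Type*} [NormedAddCommGroup X] [NormedSpace ℝ X] [CompleteSpace X]
  [NormedAddCommGroup U] [Lattice U] [HasSolidNorm U] [IsOrderedAddMonoid U] [NormedSpace ℝ U]
  {T : C0Semigroup X} {A : X →ₗ.[ℝ] X} {K : X →L[ℝ] U}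

section PartialOrder

variable [PartialOrder X]

theorem IsPositive.integral_norm_comp_toFun_generator_le (hT : T.IsPositive)
    (hA : T.IsGenerator A) (hU : IsALSpace U) (hK : ∀ v : X, 0 ≤ v → K v ≤ 0)
    (hKA : ∀ z : A.domain, 0 ≤ (z : X) → 0 ≤ K (A z)) {t : ℝ} (ht : 0 ≤ t) {c : A.domain}
    (hc : 0 ≤ (c : X)) : ∫ s in 0..t, ‖K (T.toFun s (A c))‖ ≤ ‖K c‖ := by
  calc ∫ s in 0..t, ‖K (T.toFun s (A c))‖
      = ∫ s in 0..t, (hU.normFunctional.comp K) (T.toFun s (A c)) := by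
        refine intervalIntegral.integral_congr fun s hs => ?_
        rw [uIcc_of_le ht] at hs
        exact (hU.normFunctional_of_nonneg (hT.comp_toFun_generator_nonneg hA hKA hs.1 hc)).symm
    _ = hU.normFunctional (K (T.toFun t c - c)) := by
        rw [ContinuousLinearMap.intervalIntegral_comp_comm _
          (T.intervalIntegrable_toFun_apply le_rfl ht _), integral_toFun_generator hA ht c]
        rfl
    _ = ‖K c‖ - ‖K (T.toFun t c)‖ := by
        rw [map_sub, map_sub, hU.normFunctional_of_nonpos (hK _ (hT t ht c hc)),
          hU.normFunctional_of_nonpos (hK _ hc)]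
        ring
    _ ≤ ‖K c‖ := sub_le_self _ (norm_nonneg _)

theorem IsPositive.integral_norm_comp_toFun_generator_sub_le [IsOrderedAddMonoid X]
    (hT : T.IsPositive) (hA : T.IsGenerator A) (hU : IsALSpace U)
    (hK : ∀ v : X, 0 ≤ v → K v ≤ 0) (hKA : ∀ z : A.domain, 0 ≤ (z : X) → 0 ≤ K (A z)) {t : ℝ}
    (ht : 0 ≤ t) {a b : A.domain} (ha : 0 ≤ (a : X)) (hb : 0 ≤ (b : X)) :
    ∫ s in 0..t, ‖K (T.toFun s (A a - A b))‖ ≤ ‖K ((a : X) + b)‖ := by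
  have hint (y : X) := T.intervalIntegrable_comp_toFun K.continuous.norm le_rfl ht y
  calc ∫ s in 0..t, ‖K (T.toFun s (A a - A b))‖
      ≤ ∫ s in 0..t, ‖K (T.toFun s (A (a + b)))‖ := by
        refine intervalIntegral.integral_mono_on ht (hint _) (hint _) fun s hs => ?_
        rw [A.map_add, map_sub, map_add, map_sub, map_add,
          hU _ _ (hT.comp_toFun_generator_nonneg hA hKA hs.1 ha)
            (hT.comp_toFun_generator_nonneg hA hKA hs.1 hb)]
        exact norm_sub_le _ _
    _ ≤ ‖K ((a : X) + b)‖ :=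
        hT.integral_norm_comp_toFun_generator_le hA hU hK hKA ht (add_nonneg ha hb)

end PartialOrder

variable [Lattice X] [HasSolidNorm X] [IsOrderedAddMonoid X]

theorem IsPositive.integral_norm_comp_toFun_generator_le_abs (hT : T.IsPositive) {M : ℝ}
    (hM : ∀ s, 0 ≤ s → ‖T.toFun s‖ ≤ M) (hA : T.IsGenerator A) (hU : IsALSpace U)
    (hK : ∀ v : X, 0 ≤ v → K v ≤ 0) (hKA : ∀ z : A.domain, 0 ≤ (z : X) → 0 ≤ K (A z)) {t : ℝ}
    (ht : 0 ≤ t) (x : A.domain) : ∫ s in 0..t, ‖K (T.toFun s (A x))‖ ≤ ‖K |(x : X)|‖ := by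
  have happrox (h : ℝ) (hh : 0 < h) :
      ∫ s in 0..t, ‖K (T.toFun s (h⁻¹ • (T.toFun h x - x)))‖
        ≤ ‖K (T.average h (x : X)⁺ + T.average h (x : X)⁻)‖ := by
    obtain ⟨hp, hAp⟩ := exists_generator_average hA hh.le (x : X)⁺
    obtain ⟨hn, hAn⟩ := exists_generator_average hA hh.le (x : X)⁻
    have hdiff : h⁻¹ • (T.toFun h x - x) = A ⟨_, hp⟩ - A ⟨_, hn⟩ := by
      conv_lhs => rw [← posPart_sub_negPart (x : X)]
      rw [hAp, hAn, ← smul_sub, map_sub]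
      congr 1
      abel
    rw [hdiff]
    exact hT.integral_norm_comp_toFun_generator_sub_le hA hU hK hKA ht
      (hT.average_nonneg hh.le (posPart_nonneg _)) (hT.average_nonneg hh.le (negPart_nonneg _))
  have hlhs := ((continuous_integral_norm_comp_toFun hM ht K).tendsto _).comp (hA.2 x)
  have hrhs := (K.continuous.norm.tendsto _).comp
    ((tendsto_average (T := T) (x : X)⁺).add (tendsto_average (T := T) (x : X)⁻))
  rw [posPart_add_negPart] at hrhs
  exact le_of_tendsto_of_tendsto hlhs hrhs (eventually_mem_nhdsWithin.mono happrox)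

end C0Semigroup

theorem one_admissibility_AL_general
    {X U : Type*}
    [NormedAddCommGroup X] [Lattice X] [HasSolidNorm X] [IsOrderedAddMonoid X] [NormedSpace ℝ X] [CompleteSpace X]
    [NormedAddCommGroup U] [Lattice U] [HasSolidNorm U] [IsOrderedAddMonoid U] [NormedSpace ℝ U]
    (Tsg : C0Semigroup X)
    (hTpos : ∀ s : ℝ, 0 ≤ s → ∀ x : X, 0 ≤ x → 0 ≤ Tsg.toFun s x)
    (hω : Tsg.NegGrowthBound)
    (A : X →ₗ.[ℝ] X) (hA : Tsg.IsGenerator A)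
    (hUal : IsALSpace U)
    (C : A.domain →ₗ[ℝ] U)
    (hCpos : ∀ x : A.domain, 0 ≤ (x : X) → 0 ≤ C x)
    -- the semigroup leaves the domain invariant
    (hinv : ∀ s : ℝ, 0 ≤ s → ∀ y : X, y ∈ A.domain → Tsg.toFun s y ∈ A.domain)
    -- `R0 = R(0,A)` and `K = C A⁻¹ = −C ∘ R0 : X → U` bounded
    (R0 : X →L[ℝ] X) (hR0 : IsResolventAt A 0 R0)
    (hR0dom : ∀ x : X, R0 x ∈ A.domain)
    (K : X →L[ℝ] U) (hK : ∀ x : X, K x = -C ⟨R0 x, hR0dom x⟩) :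
    ∀ t : ℝ, 0 < t → ∀ x : A.domain,
      (∫ s in Icc (0:ℝ) t,
        if h : (0:ℝ) ≤ s then ‖C ⟨Tsg.toFun s (x : X), hinv s h (x : X) x.2⟩‖ else 0)
        ≤ ‖K‖ * ‖(x : X)‖ := by
  intro t ht x
  obtain ⟨M, hM⟩ := hω.exists_norm_le
  have hCK (z : A.domain) : C z = K (A z) := by
    rw [hK, show (⟨R0 (A z), hR0dom (A z)⟩ : A.domain) = -z from
      Subtype.ext (hR0.apply_generator z), map_neg, neg_neg]
  have hK_nonpos (v : X) (hv : 0 ≤ v) : K v ≤ 0 := by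
    rw [hK]
    exact neg_nonpos.2 (hCpos _ (hR0.nonneg_of_nonneg hTpos hω hA hv))
  have hintegrand : ∀ s ∈ Icc 0 t,
      (if h : 0 ≤ s then ‖C ⟨Tsg.toFun s x, hinv s h x x.2⟩‖ else 0) = ‖K (Tsg.toFun s (A x))‖ := by
    intro s hs
    obtain ⟨_, hAx⟩ := C0Semigroup.exists_generator_toFun_apply hA hs.1 x
    rw [dif_pos hs.1, hCK, hAx]
  rw [setIntegral_congr_fun measurableSet_Icc hintegrand, integral_Icc_eq_integral_Ioc,
    ← intervalIntegral.integral_of_le ht.le]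
  calc _ ≤ ‖K |(x : X)|‖ := C0Semigroup.IsPositive.integral_norm_comp_toFun_generator_le_abs hTpos
        hM hA hUal hK_nonpos (fun z hz => hCK z ▸ hCpos z hz) ht.le x
    _ ≤ ‖K‖ * ‖(x : X)‖ := by simpa only [norm_abs_eq_norm] using K.le_opNorm |(x : X)|

/-- Let `A` generate a positive `C₀`-semigroup `(T(t))` with negative growth
bound on a Banach lattice `X`, `U` an AL-space, and `C : D(A) → U` a positive
linear operator.  Then `C` is `1`-admissible for every `t > 0`; more
precisely `∫₀ᵗ ‖C T(s) x‖_U ds ≤ ‖C A⁻¹‖_{L(X,U)} ‖x‖_X` for all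
`x ∈ D(A)` and `t > 0`.  Here `K = C A⁻¹ = −C R(0,A)`. -/
theorem one_admissibility_AL
    {X U : Type*}
    [NormedAddCommGroup X] [Lattice X] [HasSolidNorm X] [IsOrderedAddMonoid X] [NormedSpace ℝ X] [CompleteSpace X]
    [NormedAddCommGroup U] [Lattice U] [HasSolidNorm U] [IsOrderedAddMonoid U] [NormedSpace ℝ U] [CompleteSpace U]
    (Tsg : C0Semigroup X)
    (hTpos : ∀ s : ℝ, 0 ≤ s → ∀ x : X, 0 ≤ x → 0 ≤ Tsg.toFun s x)
    (hω : Tsg.NegGrowthBound)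
    (A : X →ₗ.[ℝ] X) (hA : Tsg.IsGenerator A)
    (hUal : IsALSpace U)
    (C : A.domain →ₗ[ℝ] U)
    (hCpos : ∀ x : A.domain, 0 ≤ (x : X) → 0 ≤ C x)
    -- the semigroup leaves the domain invariant
    (hinv : ∀ s : ℝ, 0 ≤ s → ∀ y : X, y ∈ A.domain → Tsg.toFun s y ∈ A.domain)
    -- `R0 = R(0,A)` and `K = C A⁻¹ = −C ∘ R0 : X → U` bounded
    (R0 : X →L[ℝ] X) (hR0 : IsResolventAt A 0 R0)
    (hR0dom : ∀ x : X, R0 x ∈ A.domain)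
    (K : X →L[ℝ] U) (hK : ∀ x : X, K x = -C ⟨R0 x, hR0dom x⟩) :
    ∀ t : ℝ, 0 < t → ∀ x : A.domain,
      (∫ s in Icc (0:ℝ) t,
        if h : (0:ℝ) ≤ s then ‖C ⟨Tsg.toFun s (x : X), hinv s h (x : X) x.2⟩‖ else 0)
        ≤ ‖K‖ * ‖(x : X)‖ :=
  one_admissibility_AL_general Tsg hTpos hω A hA hUal C hCpos hinv R0 hR0 hR0dom K hK
end
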